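/- Let τ ≥ 1 be an integer, γ > 0, and let x̄ ∈ ℝ^n and φ_{i,t} ∈ ℝ^n for i ∈ {1,…,N}, t ∈ {0,…,τ−1}. Then −(2γ/N) Σ_{i=1}^N Σ_{t=0}^{τ−1} ⟨x̄ − x*, ∇f_i(φ_{i,t})⟩ ≤ −2γτ (F(x̄) − F(x*)) − (μτγ/2)‖x̄ − x*‖² + (2γL/N) Σ_{i=1}^N Σ_{t=0}^{τ−1} ‖φ_{i,t} − x̄‖². -/

import Mathlib

/-!
Fix `i, t` and write `p = φ i t`, `g = ∇f_i(p)`. Integrating along segments, strong monotonicity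
of `∇f_i` gives `f_i(x*) ≥ f_i(p) + ⟪g, x* - p⟫ + μ/2 ‖x* - p‖²` and the `L`-Lipschitz bound gives
`f_i(x̄) ≤ f_i(p) + ⟪g, x̄ - p⟫ + L/2 ‖x̄ - p‖²`. Subtracting, and using
`‖x̄ - x*‖² ≤ 2‖x̄ - p‖² + 2‖x* - p‖²` together with `μ ≤ L`,
`⟪x̄ - x*, g⟫ ≥ f_i(x̄) - f_i(x*) + μ/4 ‖x̄ - x*‖² - L ‖p - x̄‖²`.
Summing over `t`, averaging over `i` and multiplying by `-2γ` gives the claim.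
-/

open scoped RealInnerProductSpace

open Set in
theorem add_deriv_add_half_le_of_deriv_sub_ge {φ φ' : ℝ → ℝ} {c : ℝ}
    (hφ : ∀ t ∈ Icc (0 : ℝ) 1, HasDerivAt φ (φ' t) t)
    (hφ' : ∀ t ∈ Ioo (0 : ℝ) 1, c * t ≤ φ' t - φ' 0) :
    φ 0 + φ' 0 + c / 2 ≤ φ 1 := by
  let g : ℝ → ℝ := fun t => φ t - (φ' 0 * t + c / 2 * t ^ 2)
  have hg : ∀ t ∈ Icc (0 : ℝ) 1, HasDerivAt g (φ' t - (φ' 0 + c * t)) t := fun t ht => by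
    refine ((hφ t ht).sub (((hasDerivAt_id t).const_mul (φ' 0)).add
      ((hasDerivAt_pow 2 t).const_mul (c / 2)))).congr_deriv ?_
    norm_num
    ring
  have hmono : MonotoneOn g (Icc 0 1) := by
    refine monotoneOn_of_hasDerivWithinAt_nonneg (convex_Icc 0 1)
      (fun t ht => (hg t ht).continuousAt.continuousWithinAt)
      (fun t ht => (hg t (interior_subset ht)).hasDerivWithinAt) fun t ht => ?_
    rw [interior_Icc] at ht
    linarith [hφ' t ht]
  have := hmono (left_mem_Icc.2 zero_le_one) (right_mem_Icc.2 zero_le_one) zero_le_one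
  simp only [g] at this
  linarith

variable {E : Type*} [NormedAddCommGroup E] [InnerProductSpace ℝ E] [CompleteSpace E]

theorem DifferentiableAt.hasDerivAt_comp_add_smul {f : E → ℝ} {x d : E} {t : ℝ}
    (hf : DifferentiableAt ℝ f (x + t • d)) :
    HasDerivAt (fun s : ℝ => f (x + s • d)) ⟪gradient f (x + t • d), d⟫ t := by
  have hline : HasDerivAt (fun s : ℝ => x + s • d) d t := by
    simpa using ((hasDerivAt_id t).smul_const d).const_add x
  exact hf.hasGradientAt.hasFDerivAt.comp_hasDerivAt t hline

theorem add_inner_gradient_add_half_mul_sq_le {f : E → ℝ} (hf : Differentiable ℝ f) {μ : ℝ}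
    (hsc : ∀ x y, ⟪gradient f x - gradient f y, x - y⟫ ≥ μ * ‖x - y‖ ^ 2) (x y : E) :
    f x + ⟪gradient f x, y - x⟫ + μ / 2 * ‖y - x‖ ^ 2 ≤ f y := by
  have key := add_deriv_add_half_le_of_deriv_sub_ge (φ := fun s => f (x + s • (y - x)))
    (c := μ * ‖y - x‖ ^ 2) (fun t _ => (hf _).hasDerivAt_comp_add_smul) fun t ht => by
      have h := hsc (x + t • (y - x)) x
      rw [add_sub_cancel_left, inner_smul_right, norm_smul, Real.norm_of_nonneg ht.1.le] at h
      simp only [zero_smul, add_zero, ← inner_sub_left]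
      nlinarith [ht.1]
  simp only [zero_smul, one_smul, add_zero, add_sub_cancel] at key
  linarith

theorem le_add_inner_gradient_add_half_mul_sq {f : E → ℝ} (hf : Differentiable ℝ f) {L : ℝ}
    (hlip : ∀ x y, ‖gradient f x - gradient f y‖ ≤ L * ‖x - y‖) (x y : E) :
    f y ≤ f x + ⟪gradient f x, y - x⟫ + L / 2 * ‖y - x‖ ^ 2 := by
  have key := add_deriv_add_half_le_of_deriv_sub_ge (φ := fun s => -f (x + s • (y - x)))
    (c := -(L * ‖y - x‖ ^ 2)) (fun t _ => (hf _).hasDerivAt_comp_add_smul.neg) fun t ht => by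
      have h := hlip (x + t • (y - x)) x
      rw [add_sub_cancel_left, norm_smul, Real.norm_of_nonneg ht.1.le] at h
      have hcs := real_inner_le_norm (gradient f (x + t • (y - x)) - gradient f x) (y - x)
      rw [inner_sub_left] at hcs
      simp only [zero_smul, add_zero]
      nlinarith [ht.1, norm_nonneg (y - x)]
  simp only [zero_smul, one_smul, add_zero, add_sub_cancel] at key
  linarith

theorem le_inner_sub_gradient_of_strongMono_of_lipschitz {f : E → ℝ} (hf : Differentiable ℝ f)
    {μ L : ℝ} (hμ : 0 ≤ μ) (hμL : μ ≤ L)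
    (hsc : ∀ x y, ⟪gradient f x - gradient f y, x - y⟫ ≥ μ * ‖x - y‖ ^ 2)
    (hlip : ∀ x y, ‖gradient f x - gradient f y‖ ≤ L * ‖x - y‖) (x y p : E) :
    f x - f y + μ / 4 * ‖x - y‖ ^ 2 - L * ‖p - x‖ ^ 2 ≤ ⟪x - y, gradient f p⟫ := by
  have hy := add_inner_gradient_add_half_mul_sq_le hf hsc p y
  have hx := le_add_inner_gradient_add_half_mul_sq hf hlip p x
  have hinner : ⟪gradient f p, x - p⟫ - ⟪gradient f p, y - p⟫ = ⟪x - y, gradient f p⟫ := by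
    rw [← inner_sub_right, sub_sub_sub_cancel_right, real_inner_comm]
  have htri : ‖x - y‖ ^ 2 ≤ 2 * (‖x - p‖ ^ 2 + ‖y - p‖ ^ 2) := by
    calc ‖x - y‖ ^ 2 ≤ (‖x - p‖ + ‖y - p‖) ^ 2 := by
          gcongr
          rw [← norm_sub_rev p y]
          exact norm_sub_le_norm_sub_add_norm_sub x p y
      _ ≤ 2 * (‖x - p‖ ^ 2 + ‖y - p‖ ^ 2) := add_sq_le
  rw [norm_sub_rev p x]
  nlinarith [mul_le_mul_of_nonneg_left htri hμ, mul_le_mul_of_nonneg_right hμL (sq_nonneg ‖x - p‖)]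

theorem stmt2_general (n N τ : ℕ) (hN : 0 < N)
    (γ L μ : ℝ) (hγ : 0 < γ) (hμ : 0 < μ) (hμL : μ ≤ L)
    (f : Fin N → EuclideanSpace ℝ (Fin n) → ℝ)
    (hdiff : ∀ i, Differentiable ℝ (f i))
    (hsc : ∀ i, ∀ x y : EuclideanSpace ℝ (Fin n),
      ⟪gradient (f i) x - gradient (f i) y, x - y⟫ ≥ μ * ‖x - y‖ ^ 2)
    (hlip : ∀ i, ∀ x y : EuclideanSpace ℝ (Fin n),
      ‖gradient (f i) x - gradient (f i) y‖ ≤ L * ‖x - y‖)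
    (F : EuclideanSpace ℝ (Fin n) → ℝ)
    (hF : F = fun x => (N : ℝ)⁻¹ * ∑ i, f i x)
    (xstar : EuclideanSpace ℝ (Fin n))
    (xbar : EuclideanSpace ℝ (Fin n))
    (φ : Fin N → Fin τ → EuclideanSpace ℝ (Fin n)) :
    -(2 * γ / N) * ∑ i, ∑ t, ⟪xbar - xstar, gradient (f i) (φ i t)⟫ ≤
      -(2 * γ * τ) * (F xbar - F xstar)
        - (μ * τ * γ / 2) * ‖xbar - xstar‖ ^ 2
        + (2 * γ * L / N) * ∑ i, ∑ t, ‖φ i t - xbar‖ ^ 2 := by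
  have hsum : ∑ i, ∑ t : Fin τ, (f i xbar - f i xstar + μ / 4 * ‖xbar - xstar‖ ^ 2
      - L * ‖φ i t - xbar‖ ^ 2) ≤ ∑ i, ∑ t, ⟪xbar - xstar, gradient (f i) (φ i t)⟫ :=
    Finset.sum_le_sum fun i _ => Finset.sum_le_sum fun t _ =>
      le_inner_sub_gradient_of_strongMono_of_lipschitz (hdiff i) hμ.le hμL (hsc i) (hlip i) _ _ _
  have hN' : (N : ℝ) ≠ 0 := by positivity
  calc -(2 * γ / N) * ∑ i, ∑ t, ⟪xbar - xstar, gradient (f i) (φ i t)⟫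
      ≤ -(2 * γ / N) * ∑ i, ∑ t : Fin τ, (f i xbar - f i xstar + μ / 4 * ‖xbar - xstar‖ ^ 2
          - L * ‖φ i t - xbar‖ ^ 2) :=
        mul_le_mul_of_nonpos_left hsum (neg_nonpos.2 (by positivity))
    _ = _ := by
      subst hF
      simp only [Finset.sum_sub_distrib, Finset.sum_add_distrib, Finset.sum_const,
        Finset.card_univ, Fintype.card_fin, nsmul_eq_mul, ← Finset.mul_sum]
      field_simp
      ring

/-- For `L`-smooth, `μ`-strongly convex `f_i` with minimizer `x*` of the
average `F`:
`−(2γ/N) Σ_i Σ_t ⟪x̄ − x*, ∇f_i(φ_{i,t})⟫ ≤ −2γτ(F(x̄) − F(x*)) − (μτγ/2)‖x̄ − x*‖²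
  + (2γL/N) Σ_{i,t} ‖φ_{i,t} − x̄‖²`. -/
theorem stmt2 (n N τ : ℕ) (hN : 0 < N) (hτ : 1 ≤ τ)
    (γ L μ : ℝ) (hγ : 0 < γ) (hμ : 0 < μ) (hμL : μ ≤ L)
    (f : Fin N → EuclideanSpace ℝ (Fin n) → ℝ)
    (hdiff : ∀ i, Differentiable ℝ (f i))
    (hsc : ∀ i, ∀ x y : EuclideanSpace ℝ (Fin n),
      ⟪gradient (f i) x - gradient (f i) y, x - y⟫ ≥ μ * ‖x - y‖ ^ 2)
    (hlip : ∀ i, ∀ x y : EuclideanSpace ℝ (Fin n),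
      ‖gradient (f i) x - gradient (f i) y‖ ≤ L * ‖x - y‖)
    (F : EuclideanSpace ℝ (Fin n) → ℝ)
    (hF : F = fun x => (N : ℝ)⁻¹ * ∑ i, f i x)
    (xstar : EuclideanSpace ℝ (Fin n))
    (hxstar : ∀ y, F xstar ≤ F y)
    (xbar : EuclideanSpace ℝ (Fin n))
    (φ : Fin N → Fin τ → EuclideanSpace ℝ (Fin n)) :
    -(2 * γ / N) * ∑ i, ∑ t, ⟪xbar - xstar, gradient (f i) (φ i t)⟫ ≤
      -(2 * γ * τ) * (F xbar - F xstar)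
        - (μ * τ * γ / 2) * ‖xbar - xstar‖ ^ 2
        + (2 * γ * L / N) * ∑ i, ∑ t, ‖φ i t - xbar‖ ^ 2 :=
  stmt2_general n N τ hN γ L μ hγ hμ hμL f hdiff hsc hlip F hF xstar xbar φ
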